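/- Let (ι, D, par, ρ, K) be a discrete Bayesian network, let A ⊆ ι be parent-closed, and let s : ∀ i, D i be any full assignment. Then the marginal of the factorized joint on A is the factorized product over A: ∑ over full assignments u with u i = s i for all i ∈ A of ∏_{i : ι} K i u (u i) equals ∏_{i ∈ A} K i s (s i). -/
import Mathlib

open scoped NNReal
open Finset

private theorem bayes_aux
    {ι : Type*} [Fintype ι] [DecidableEq ι]
    (D : ι → Type*) [∀ i, Fintype (D i)] [∀ i, Nonempty (D i)] [∀ i, DecidableEq (D i)]
    (par : ι → Finset ι) (ρ : ι → ℕ)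
    (hacyc : ∀ i, ∀ j ∈ par i, ρ j < ρ i)
    (K : ∀ i, (∀ j, D j) → D i → ℝ≥0)
    (hloc : ∀ i, ∀ t t' : ∀ j, D j, (∀ j ∈ par i, t j = t' j) → ∀ v, K i t v = K i t' v)
    (hnorm : ∀ i, ∀ t : ∀ j, D j, ∑ v, K i t v = 1) :
    ∀ n (A : Finset ι), Aᶜ.card = n → (∀ i ∈ A, ∀ j ∈ par i, j ∈ A) →
    ∀ s : ∀ i, D i,
    ∑ u ∈ Finset.univ.filter (fun u : ∀ i, D i => ∀ i ∈ A, u i = s i),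
        ∏ i, K i u (u i)
      = ∏ i ∈ A, K i s (s i) := by
  intro n
  induction n with
  | zero =>
    intro A hcard _ s
    have hAuniv : A = Finset.univ := by
      have h0 : Aᶜ = ∅ := Finset.card_eq_zero.mp hcard
      simpa using congrArg (·ᶜ) h0
    subst hAuniv
    have : Finset.univ.filter (fun u : ∀ i, D i => ∀ i ∈ Finset.univ, u i = s i) = {s} := by
      ext u
      simp [funext_iff]
    rw [this, Finset.sum_singleton]
  | succ n ih =>
    intro A hcard hA s
    have hne : Aᶜ.Nonempty := Finset.card_pos.mp (by omega)
    obtain ⟨i, hi, hmin⟩ := Finset.exists_min_image Aᶜ ρ hne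
    have hiA : i ∉ A := Finset.mem_compl.mp hi
    set A' := insert i A with hA'
    have hcard' : A'ᶜ.card = n := by
      rw [hA', Finset.compl_insert, Finset.card_erase_of_mem hi, hcard]
      omega
    have hclosed' : ∀ a ∈ A', ∀ j ∈ par a, j ∈ A' := by
      intro a ha j hj
      rcases Finset.mem_insert.mp ha with rfl | ha
      · by_contra hjA'
        have hjA : j ∉ A := fun h => hjA' (Finset.mem_insert_of_mem h)
        exact absurd (hacyc a j hj) (not_lt.mpr (hmin j (Finset.mem_compl.mpr hjA)))
      · exact Finset.mem_insert_of_mem (hA a ha j hj)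
    have hiparj : ∀ j ∈ A, i ∉ par j := fun j hj hij => hiA (hA j hj i hij)
    -- split sum by value at i
    have hsplit :
        ∑ u ∈ Finset.univ.filter (fun u : ∀ i, D i => ∀ j ∈ A, u j = s j),
            ∏ k, K k u (u k)
        = ∑ v : D i, ∑ u ∈ Finset.univ.filter
            (fun u : ∀ i, D i => ∀ j ∈ A', u j = Function.update s i v j),
            ∏ k, K k u (u k) := by
      rw [← Finset.sum_fiberwise_of_maps_to (g := fun u : ∀ i, D i => u i)
        (fun u _ => Finset.mem_univ _)]
      refine Finset.sum_congr rfl fun v _ => ?_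
      rw [Finset.filter_filter]
      refine Finset.sum_congr (Finset.filter_congr fun u _ => ?_) fun _ _ => rfl
      constructor
      · rintro ⟨h1, h2⟩ j hj
        rcases Finset.mem_insert.mp hj with rfl | hj
        · simp [h2]
        · rw [h1 j hj, Function.update_of_ne (fun h => hiA (by rwa [h] at hj))]
      · intro h
        refine ⟨fun j hj => ?_, ?_⟩
        · rw [h j (Finset.mem_insert_of_mem hj), Function.update_of_ne (fun hji => hiA (by rwa [hji] at hj))]
        · have := h i (Finset.mem_insert_self i A)
          simpa using this
    rw [hsplit]
    have hinner : ∀ v : D i,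
        ∑ u ∈ Finset.univ.filter
            (fun u : ∀ i, D i => ∀ j ∈ A', u j = Function.update s i v j),
            ∏ k, K k u (u k)
        = K i s v * ∏ j ∈ A, K j s (s j) := by
      intro v
      rw [ih A' hcard' hclosed' (Function.update s i v), hA',
        Finset.prod_insert hiA]
      have h1 : K i (Function.update s i v) (Function.update s i v i) = K i s v := by
        rw [Function.update_self]
        exact hloc i _ s (fun j hj => Function.update_of_ne
          (fun h => absurd (hacyc i j hj) (by simp [h])) _ _) v
      have h2 : ∀ j ∈ A, K j (Function.update s i v) (Function.update s i v j)
          = K j s (s j) := by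
        intro j hj
        have hji : j ≠ i := fun h => hiA (by rwa [h] at hj)
        rw [Function.update_of_ne hji]
        exact hloc j _ s (fun k hk => Function.update_of_ne
          (fun h => hiparj j hj (by rwa [h] at hk)) _ _) _
      rw [h1, Finset.prod_congr rfl h2]
    simp_rw [hinner]
    rw [← Finset.sum_mul, hnorm i s, one_mul]

/-- For a discrete Bayesian network and a parent-closed set `A` of
attributes, the marginal of the factorized joint on `A` (at an assignment `s`) is the
factorized product over `A`:
`∑_{u : u ≡ s on A} ∏_i K i u (u i) = ∏_{i ∈ A} K i s (s i)`. -/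
theorem bayes_net_marginal_on_parent_closed
    {ι : Type*} [Fintype ι] [DecidableEq ι]
    (D : ι → Type*) [∀ i, Fintype (D i)] [∀ i, Nonempty (D i)] [∀ i, DecidableEq (D i)]
    (par : ι → Finset ι) (ρ : ι → ℕ)
    (hacyc : ∀ i, ∀ j ∈ par i, ρ j < ρ i)
    (K : ∀ i, (∀ j, D j) → D i → ℝ≥0)
    (hloc : ∀ i, ∀ t t' : ∀ j, D j, (∀ j ∈ par i, t j = t' j) → ∀ v, K i t v = K i t' v)
    (hnorm : ∀ i, ∀ t : ∀ j, D j, ∑ v, K i t v = 1)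
    (A : Finset ι) (hA : ∀ i ∈ A, ∀ j ∈ par i, j ∈ A)
    (s : ∀ i, D i) :
    ∑ u ∈ Finset.univ.filter (fun u : ∀ i, D i => ∀ i ∈ A, u i = s i),
        ∏ i, K i u (u i)
      = ∏ i ∈ A, K i s (s i) :=
  bayes_aux D par ρ hacyc K hloc hnorm Aᶜ.card A rfl hA s
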